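/- For every positive integer n, the linear Euclidean distance matrices X_{[n]} and X_{[2n]} defined by X_{[m]}(i,j) = (i − j)² for 1 ≤ i, j ≤ m satisfy rank₊(X_{[2n]}) ≤ rank₊(X_{[n]}) + 2. -/

import Mathlib

open Matrix

/-- The nonnegative rank of a real matrix: the smallest `r` such that `X = W * H`
with `W` an (rows × r) matrix and `H` an (r × cols) matrix, both entrywise nonnegative. -/
noncomputable def nnRank {α β : Type*} (X : Matrix α β ℝ) : ℕ :=
  sInf {r : ℕ | ∃ (W : Matrix α (Fin r) ℝ) (H : Matrix (Fin r) β ℝ),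
    (∀ i k, 0 ≤ W i k) ∧ (∀ k j, 0 ≤ H k j) ∧ X = W * H}

/-- The m×m linear Euclidean distance matrix with entries `(i - j)²`. -/
noncomputable def LEDM (m : ℕ) : Matrix (Fin m) (Fin m) ℝ :=
  Matrix.of fun i j => ((i : ℝ) - (j : ℝ)) ^ 2

/-! Fold `{0, …, 2n-1}` onto `{0, …, n-1}` by reflecting the upper half. Folding changes
`(i - j)²` only for pairs on opposite sides of the centre `n - 1/2`, and there the difference of
squares factors as `(2n-1-2i)(2j+1-2n)`. Hence `X_{[2n]}` is a submatrix of `X_{[n]}` plus the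
symmetrised rank-one matrix `p qᵀ + q pᵀ` with `p, q ≥ 0`, and the nonnegative rank is monotone
under submatrices and subadditive. -/

section NonnegRank

variable {α β κ : Type*}

def HasNonnegFactorization (X : Matrix α β ℝ) (r : ℕ) : Prop :=
  ∃ (W : Matrix α (Fin r) ℝ) (H : Matrix (Fin r) β ℝ),
    (∀ i k, 0 ≤ W i k) ∧ (∀ k j, 0 ≤ H k j) ∧ X = W * H

theorem hasNonnegFactorization_card_of_eq_mul [Fintype κ] {X : Matrix α β ℝ}
    (W : Matrix α κ ℝ) (H : Matrix κ β ℝ) (hW : ∀ i k, 0 ≤ W i k) (hH : ∀ k j, 0 ≤ H k j)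
    (hX : X = W * H) : HasNonnegFactorization X (Fintype.card κ) := by
  let e := (Fintype.equivFin κ).symm
  refine ⟨W.submatrix id e, H.submatrix e id, fun i k => hW _ _, fun k j => hH _ _, ?_⟩
  rw [submatrix_mul_equiv, submatrix_id_id, hX]

theorem nnRank_le_of_eq_mul [Fintype κ] {X : Matrix α β ℝ}
    (W : Matrix α κ ℝ) (H : Matrix κ β ℝ) (hW : ∀ i k, 0 ≤ W i k) (hH : ∀ k j, 0 ≤ H k j)
    (hX : X = W * H) : nnRank X ≤ Fintype.card κ :=
  Nat.sInf_le (hasNonnegFactorization_card_of_eq_mul W H hW hH hX)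

theorem hasNonnegFactorization_nnRank [Fintype β] [DecidableEq β] {X : Matrix α β ℝ}
    (hX : ∀ i j, 0 ≤ X i j) : HasNonnegFactorization X (nnRank X) :=
  Nat.sInf_mem (s := {r | HasNonnegFactorization X r})
    ⟨_, hasNonnegFactorization_card_of_eq_mul X (1 : Matrix β β ℝ) hX
      (fun k j => by rw [one_apply]; split_ifs <;> norm_num) (Matrix.mul_one X).symm⟩

theorem nnRank_submatrix_le [Fintype β] [DecidableEq β] {γ δ : Type*} {X : Matrix α β ℝ}
    (hX : ∀ i j, 0 ≤ X i j) (f : γ → α) (g : δ → β) :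
    nnRank (X.submatrix f g) ≤ nnRank X := by
  obtain ⟨W, H, hW, hH, hWH⟩ := hasNonnegFactorization_nnRank hX
  simpa using nnRank_le_of_eq_mul (W.submatrix f id) (H.submatrix id g)
    (fun i k => hW _ _) (fun k j => hH _ _)
    ((congrArg (·.submatrix f g) hWH).trans (submatrix_mul W H f id g Function.bijective_id))

theorem nnRank_add_le [Fintype β] [DecidableEq β] {X Y : Matrix α β ℝ}
    (hX : ∀ i j, 0 ≤ X i j) (hY : ∀ i j, 0 ≤ Y i j) :
    nnRank (X + Y) ≤ nnRank X + nnRank Y := by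
  obtain ⟨W₁, H₁, hW₁, hH₁, hWH₁⟩ := hasNonnegFactorization_nnRank hX
  obtain ⟨W₂, H₂, hW₂, hH₂, hWH₂⟩ := hasNonnegFactorization_nnRank hY
  simpa using nnRank_le_of_eq_mul (fromCols W₁ W₂) (fromRows H₁ H₂)
    (fun i k => by cases k <;> simp [hW₁, hW₂]) (fun k j => by cases k <;> simp [hH₁, hH₂])
    ((congrArg₂ (· + ·) hWH₁ hWH₂).trans (fromCols_mul_fromRows W₁ W₂ H₁ H₂).symm)

theorem nnRank_vecMulVec_le_one {p : α → ℝ} {q : β → ℝ} (hp : ∀ i, 0 ≤ p i)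
    (hq : ∀ j, 0 ≤ q j) : nnRank (vecMulVec p q) ≤ 1 :=
  nnRank_le_of_eq_mul (replicateCol Unit p) (replicateRow Unit q) (fun i _ => hp i)
    (fun _ j => hq j) (vecMulVec_eq Unit p q)

theorem vecMulVec_nonneg {p : α → ℝ} {q : β → ℝ} (hp : ∀ i, 0 ≤ p i) (hq : ∀ j, 0 ≤ q j)
    (i : α) (j : β) : 0 ≤ vecMulVec p q i j :=
  mul_nonneg (hp i) (hq j)

end NonnegRank

section LEDM

variable {n : ℕ}

def foldHalves (i : Fin (2 * n)) : Fin n :=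
  ⟨if (i : ℕ) < n then i else 2 * n - 1 - i, by have := i.isLt; split <;> omega⟩

theorem foldHalves_cast (i : Fin (2 * n)) :
    ((foldHalves i : ℕ) : ℝ) = if (i : ℕ) < n then (i : ℝ) else 2 * n - 1 - i := by
  unfold foldHalves
  split_ifs with h
  · rfl
  · have := i.isLt
    rw [Nat.cast_sub (by omega), Nat.cast_sub (by omega)]
    push_cast
    ring

def lowerWeight (i : Fin (2 * n)) : ℝ := if (i : ℕ) < n then 2 * n - 1 - 2 * i else 0

def upperWeight (i : Fin (2 * n)) : ℝ := if (i : ℕ) < n then 0 else 2 * i + 1 - 2 * n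

theorem lowerWeight_nonneg (i : Fin (2 * n)) : 0 ≤ lowerWeight i := by
  unfold lowerWeight
  split_ifs with h
  · have : (i : ℝ) + 1 ≤ n := by exact_mod_cast h
    linarith
  · rfl

theorem upperWeight_nonneg (i : Fin (2 * n)) : 0 ≤ upperWeight i := by
  unfold upperWeight
  split_ifs with h
  · rfl
  · have : (n : ℝ) ≤ i := by exact_mod_cast not_lt.mp h
    linarith

theorem LEDM_nonneg (m : ℕ) (i j : Fin m) : 0 ≤ LEDM m i j :=
  sq_nonneg _

theorem LEDM_double_eq :
    LEDM (2 * n) = (LEDM n).submatrix foldHalves foldHalves +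
      (vecMulVec lowerWeight upperWeight + vecMulVec upperWeight lowerWeight) := by
  ext i j
  simp only [LEDM, Matrix.add_apply, submatrix_apply, of_apply, vecMulVec_apply, foldHalves_cast,
    lowerWeight, upperWeight]
  split_ifs <;> ring

end LEDM

theorem nnRank_LEDM_double_le_general (n : ℕ) :
    nnRank (LEDM (2 * n)) ≤ nnRank (LEDM n) + 2 := by
  have hp := lowerWeight_nonneg (n := n)
  have hq := upperWeight_nonneg (n := n)
  have hpq := vecMulVec_nonneg hp hq
  have hqp := vecMulVec_nonneg hq hp
  rw [LEDM_double_eq]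
  calc _ ≤ nnRank ((LEDM n).submatrix foldHalves foldHalves) +
        (nnRank (vecMulVec lowerWeight upperWeight) + nnRank (vecMulVec upperWeight lowerWeight)) :=
        (nnRank_add_le (fun i j => LEDM_nonneg n _ _)
          (fun i j => add_nonneg (hpq i j) (hqp i j))).trans
            (Nat.add_le_add_left (nnRank_add_le hpq hqp) _)
    _ ≤ nnRank (LEDM n) + (1 + 1) :=
        add_le_add (nnRank_submatrix_le (LEDM_nonneg n) _ _)
          (add_le_add (nnRank_vecMulVec_le_one hp hq) (nnRank_vecMulVec_le_one hq hp))

theorem nnRank_LEDM_double_le (n : ℕ) (hn : 0 < n) :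
    nnRank (LEDM (2 * n)) ≤ nnRank (LEDM n) + 2 :=
  nnRank_LEDM_double_le_general n
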